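/- arXiv:1902.09083 — 9 statements merged into one kernel-verified Lean document; each statement's English description precedes it below -/
import Mathlib

section
/- For positive natural numbers m₁, m₂, m₃, the direct product Z_{m₁} × Z_{m₂} × Z_{m₃} is isomorphic to Z_{a₁} × Z_{a₂} × Z_{a₃}, where a₁ = gcd(m₁, m₂, m₃), a₂ = lcm(m₁, gcd(m₂, m₃)), and a₃ = lcm(m₂, m₃). -/
/-!
For `d = gcd a b` and `l = lcm a b`, the diagonal `ZMod l → ZMod a × ZMod b` is injective and its
image is killed by `δ (x, y) = x - y mod d`. Bézout gives an element of `ZMod a × ZMod b` killed by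
`d` on which `δ` is `1`, i.e. a splitting `ZMod d → ZMod a × ZMod b` of `δ`, and since
`d * l = a * b` the two maps together give `ZMod d × ZMod l ≃+ ZMod a × ZMod b`. The theorem
applies this twice, first to `(m₂, m₃)` and then to `(m₁, gcd m₂ m₃)`.
-/

open Function

theorem AddMonoidHom.bijective_coprod_of_leftInverse {D L G : Type*} [AddCommGroup D]
    [AddCommGroup L] [AddCommGroup G] [Finite G] (s : D →+ G) (ι : L →+ G) (δ : G →+ D)
    (hs : LeftInverse δ s) (hι : Injective ι) (hδι : ∀ w, δ (ι w) = 0)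
    (hcard : Nat.card D * Nat.card L = Nat.card G) : Bijective (s.coprod ι) := by
  have hinj : Injective (s.coprod ι) := by
    refine (injective_iff_map_eq_zero _).mpr fun ⟨t, w⟩ h => ?_
    have ht : t = 0 := by simpa [hs t, hδι w] using congrArg δ h
    subst ht
    exact Prod.ext rfl (hι <| by simpa using h)
  have := Finite.of_injective _ hinj
  exact (Nat.bijective_iff_injective_and_card _).mpr ⟨hinj, by rw [Nat.card_prod, hcard]⟩

namespace ZMod

def castSubCastHom {d a b : ℕ} (ha : d ∣ a) (hb : d ∣ b) : ZMod a × ZMod b →+ ZMod d :=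
  (castHom ha (ZMod d)).toAddMonoidHom.coprod (-(castHom hb (ZMod d)).toAddMonoidHom)

theorem castSubCastHom_intCast {d a b : ℕ} (ha : d ∣ a) (hb : d ∣ b) (m n : ℤ) :
    castSubCastHom ha hb ((m : ZMod a), (n : ZMod b)) = ((m - n : ℤ) : ZMod d) := by
  simp [castSubCastHom, sub_eq_add_neg]

theorem exists_leftInverse_castSubCastHom_gcd {a b : ℕ} (ha : a ≠ 0) :
    ∃ s : ZMod (a.gcd b) →+ ZMod a × ZMod b,
      LeftInverse (castSubCastHom (Nat.gcd_dvd_left a b) (Nat.gcd_dvd_right a b)) s := by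
  set d := a.gcd b
  obtain ⟨a', ha'⟩ := Nat.gcd_dvd_left a b
  obtain ⟨b', hb'⟩ := Nat.gcd_dvd_right a b
  set u := a.gcdA b
  set v := a.gcdB b
  have hbezout : (a' : ℤ) * u + b' * v = 1 := by
    have hd : (d : ℤ) ≠ 0 := by exact_mod_cast Nat.gcd_ne_zero_left ha
    refine mul_left_cancel₀ hd ?_
    have hA : (a : ℤ) = d * a' := by exact_mod_cast ha'
    have hB : (b : ℤ) = d * b' := by exact_mod_cast hb'
    linear_combination -Nat.gcd_eq_gcd_ab a b - u * hA - v * hB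
  -- `e 1 = (u a', -v b')` is killed by `d`, and its two coordinates differ by `a' u + b' v = 1`
  let e : ℤ →+ ZMod a × ZMod b :=
    zmultiplesHom _ (((u * a' : ℤ) : ZMod a), ((-(v * b') : ℤ) : ZMod b))
  have he : e d = 0 := by
    refine Prod.ext ?_ ?_ <;>
      simp only [e, zmultiplesHom_apply, Prod.smul_mk, zsmul_eq_mul, ← Int.cast_mul,
        Prod.fst_zero, Prod.snd_zero, intCast_zmod_eq_zero_iff_dvd]
    · exact ⟨u, by rw [ha']; push_cast; ring⟩
    · exact ⟨-v, by rw [hb']; push_cast; ring⟩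
  refine ⟨lift d ⟨e, he⟩, fun t => ?_⟩
  obtain ⟨n, rfl⟩ := intCast_surjective t
  rw [lift_coe]
  simp only [e, zmultiplesHom_apply, Prod.smul_mk, zsmul_eq_mul, ← Int.cast_mul,
    castSubCastHom_intCast]
  congr 1
  linear_combination n * hbezout

theorem nonempty_addEquiv_gcd_prod_lcm_of_neZero (a b : ℕ) [NeZero a] [NeZero b] :
    Nonempty (ZMod a × ZMod b ≃+ ZMod (a.gcd b) × ZMod (a.lcm b)) := by
  obtain ⟨s, hs⟩ := exists_leftInverse_castSubCastHom_gcd (NeZero.ne a) (b := b)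
  -- the diagonal embedding: `ZMod a × ZMod b` has characteristic `lcm a b`
  let ι := (castHom dvd_rfl (ZMod a × ZMod b)).toAddMonoidHom
  have hδι : ∀ w, castSubCastHom (Nat.gcd_dvd_left a b) (Nat.gcd_dvd_right a b) (ι w) = 0 := by
    intro w
    obtain ⟨n, rfl⟩ := intCast_surjective w
    have hιn : ι n = ((n : ZMod a), (n : ZMod b)) := Prod.ext (by simp [ι]) (by simp [ι])
    rw [hιn, castSubCastHom_intCast, sub_self, Int.cast_zero]
  have hcard : Nat.card (ZMod (a.gcd b)) * Nat.card (ZMod (a.lcm b)) =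
      Nat.card (ZMod a × ZMod b) := by
    simp only [Nat.card_zmod, Nat.card_prod, Nat.gcd_mul_lcm]
  exact ⟨(AddEquiv.ofBijective _ <| AddMonoidHom.bijective_coprod_of_leftInverse s ι _ hs
    (castHom_injective _) hδι hcard).symm⟩

theorem nonempty_addEquiv_gcd_prod_lcm (a b : ℕ) :
    Nonempty (ZMod a × ZMod b ≃+ ZMod (a.gcd b) × ZMod (a.lcm b)) := by
  rcases eq_or_ne a 0 with rfl | ha
  · exact ⟨AddEquiv.prodComm.trans <|
      (ringEquivCongr (Nat.gcd_zero_left b).symm).toAddEquiv.prodCongr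
        (ringEquivCongr (Nat.lcm_zero_left b).symm).toAddEquiv⟩
  rcases eq_or_ne b 0 with rfl | hb
  · exact ⟨(ringEquivCongr (Nat.gcd_zero_right a).symm).toAddEquiv.prodCongr
      (ringEquivCongr (Nat.lcm_zero_right a).symm).toAddEquiv⟩
  have := NeZero.mk ha
  have := NeZero.mk hb
  exact nonempty_addEquiv_gcd_prod_lcm_of_neZero a b

end ZMod

theorem stmt_1_general (m₁ m₂ m₃ : ℕ) :
    Nonempty ((ZMod m₁ × ZMod m₂ × ZMod m₃) ≃+
      (ZMod (Nat.gcd m₁ (Nat.gcd m₂ m₃)) ×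
       ZMod (Nat.lcm m₁ (Nat.gcd m₂ m₃)) ×
       ZMod (Nat.lcm m₂ m₃))) := by
  obtain ⟨e₂₃⟩ := ZMod.nonempty_addEquiv_gcd_prod_lcm m₂ m₃
  obtain ⟨e₁⟩ := ZMod.nonempty_addEquiv_gcd_prod_lcm m₁ (Nat.gcd m₂ m₃)
  exact ⟨((AddEquiv.refl _).prodCongr e₂₃).trans <| AddEquiv.prodAssoc.symm.trans <|
    (e₁.prodCongr (AddEquiv.refl _)).trans AddEquiv.prodAssoc⟩

theorem stmt_1 (m₁ m₂ m₃ : ℕ) (h₁ : 0 < m₁) (h₂ : 0 < m₂) (h₃ : 0 < m₃) :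
    Nonempty ((ZMod m₁ × ZMod m₂ × ZMod m₃) ≃+
      (ZMod (Nat.gcd m₁ (Nat.gcd m₂ m₃)) ×
       ZMod (Nat.lcm m₁ (Nat.gcd m₂ m₃)) ×
       ZMod (Nat.lcm m₂ m₃))) :=
  stmt_1_general m₁ m₂ m₃
end

section
/- Let s ≥ 1 and m₁, …, m_s be positive natural numbers. Define a₁ = gcd(m₁, …, m_s), a_i = lcm(m_{i-1}, gcd(m_i, …, m_s)) for 2 ≤ i ≤ s-1, and a_s = lcm(m_{s-1}, m_s). Then the direct product Z_{m₁} × ⋯ × Z_{m_s} is isomorphic to Z_{a₁} × ⋯ × Z_{a_s}. -/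
/-!
For two moduli, `ℤ/m × ℤ/n ≃ ℤ/gcd(m, n) × ℤ/lcm(m, n)`: by the Chinese remainder theorem
both sides split over the primes `p ∣ mn`, and at each prime
`ℤ/p^α × ℤ/p^β ≃ ℤ/p^min(α,β) × ℤ/p^max(α,β)` (if `m` or `n` is `0` the two factors are
merely swapped).

The general case follows by induction on `s`. If `b` is the sequence attached to
`(m₂, …, m_s)`, then `b₁ = gcd(m₂, …, m_s)`, so replacing `ℤ/m₁ × ℤ/b₁` by
`ℤ/gcd(m₁, b₁) × ℤ/lcm(m₁, b₁)` yields exactly `a₁ = gcd(m₁, b₁)`, `a₂ = lcm(m₁, b₁)`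
and `aᵢ = bᵢ₋₁` for `i ≥ 3`.
-/

open Finset

noncomputable def ZMod.ringEquivPiPrimePow {n : ℕ} (hn : n ≠ 0) {P : Finset ℕ}
    (hP : ∀ p ∈ P, p.Prime) (hnP : n.primeFactors ⊆ P) :
    ZMod n ≃+* Π p : P, ZMod ((p : ℕ) ^ n.factorization p) :=
  (ZMod.ringEquivCongr <| by
      rw [prod_coe_sort P fun p => p ^ n.factorization p,
        ← Finsupp.prod_of_support_subset _ (by simpa using hnP) _ (fun _ _ => pow_zero _),
        Nat.prod_factorization_pow_eq_self hn]).trans <|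
    ZMod.prodEquivPi _ fun p q hpq =>
      Nat.coprime_pow_primes _ _ (hP p p.2) (hP q q.2) (Subtype.coe_ne_coe.mpr hpq)

def AddEquiv.piProd {ι : Type*} (M N : ι → Type*) [∀ i, Add (M i)] [∀ i, Add (N i)] :
    (Π i, M i × N i) ≃+ (Π i, M i) × (Π i, N i) where
  __ := Equiv.arrowProdEquivProdArrow ι M N
  map_add' _ _ := rfl

theorem ZMod.nonempty_prod_pow_addEquiv_min_max {p a b c d : ℕ} (hc : min a b = c)
    (hd : max a b = d) :
    Nonempty (ZMod (p ^ a) × ZMod (p ^ b) ≃+ ZMod (p ^ c) × ZMod (p ^ d)) := by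
  subst hc hd
  rcases le_total a b with h | h
  · rw [min_eq_left h, max_eq_right h]
    exact ⟨.refl _⟩
  · rw [min_eq_right h, max_eq_left h]
    exact ⟨.prodComm⟩

theorem ZMod.nonempty_prod_addEquiv_gcd_lcm (m n : ℕ) :
    Nonempty (ZMod m × ZMod n ≃+ ZMod (m.gcd n) × ZMod (m.lcm n)) := by
  rcases eq_or_ne m 0 with rfl | hm
  · rw [Nat.gcd_zero_left, Nat.lcm_zero_left]
    exact ⟨.prodComm⟩
  rcases eq_or_ne n 0 with rfl | hn
  · rw [Nat.gcd_zero_right, Nat.lcm_zero_right]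
    exact ⟨.refl _⟩
  have hP : ∀ p ∈ (m * n).primeFactors, p.Prime := fun _ => Nat.prime_of_mem_primeFactors
  have hsub {k : ℕ} (hk : k ∣ m * n) : k.primeFactors ⊆ (m * n).primeFactors :=
    Nat.primeFactors_mono hk (mul_ne_zero hm hn)
  have hg : m.gcd n ≠ 0 := Nat.gcd_ne_zero_left hm
  have hl : m.lcm n ≠ 0 := Nat.lcm_ne_zero hm hn
  have hfac (p : ℕ) : min (m.factorization p) (n.factorization p) = (m.gcd n).factorization p ∧
      max (m.factorization p) (n.factorization p) = (m.lcm n).factorization p := by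
    simp [Nat.factorization_gcd hm hn, Nat.factorization_lcm hm hn]
  let crt {k : ℕ} (hk : k ≠ 0) (hkd : k ∣ m * n) :=
    (ZMod.ringEquivPiPrimePow hk hP (hsub hkd)).toAddEquiv
  refine ⟨(crt hm (dvd_mul_right m n)).prodCongr (crt hn (dvd_mul_left n m)) |>.trans <|
    (AddEquiv.piProd _ _).symm.trans <| ?_⟩
  refine (AddEquiv.piCongrRight fun p => ?_).trans <| (AddEquiv.piProd _ _).trans <|
    ((crt hg ((Nat.gcd_dvd_left m n).trans (dvd_mul_right m n))).prodCongr
      (crt hl (Nat.lcm_dvd_mul m n))).symm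
  exact (ZMod.nonempty_prod_pow_addEquiv_min_max (hfac p).1 (hfac p).2).some

section
variable {α : Type*} [CommMonoidWithZero α] [NormalizedGCDMonoid α] {n : ℕ}

theorem Fin.gcd_univ_succ (f : Fin (n + 1) → α) :
    univ.gcd f = GCDMonoid.gcd (f 0) (univ.gcd (Fin.tail f)) := by
  rw [Fin.univ_succ, gcd_cons, map_eq_image, gcd_image]
  rfl

theorem Fin.gcd_Ici_succ (f : Fin (n + 1) → α) (i : Fin n) :
    (Ici i.succ).gcd f = (Ici i).gcd (Fin.tail f) := by
  rw [← Fin.finsetImage_succ_Ici, gcd_image]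
  rfl
end

theorem ZMod.nonempty_pi_addEquiv_cons_gcd_lcm {s : ℕ} (m : Fin (s + 2) → ℕ)
    (b : Fin (s + 1) → ℕ) (e : (Π i, ZMod (Fin.tail m i)) ≃+ Π i, ZMod (b i)) :
    Nonempty ((Π i, ZMod (m i)) ≃+ Π i : Fin (s + 2),
      ZMod ((Fin.cons ((m 0).gcd (b 0)) (Fin.cons ((m 0).lcm (b 0)) (Fin.tail b)) :
        Fin (s + 2) → ℕ) i)) := by
  obtain ⟨pair⟩ := ZMod.nonempty_prod_addEquiv_gcd_lcm (m 0) (b 0)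
  let cons {n : ℕ} (k : Fin (n + 1) → ℕ) :=
    (Fin.consLinearEquiv ℤ fun i => ZMod (k i)).toAddEquiv
  let c : Fin (s + 2) → ℕ :=
    Fin.cons ((m 0).gcd (b 0)) (Fin.cons ((m 0).lcm (b 0)) (Fin.tail b))
  exact ⟨(cons m).symm.trans <| (AddEquiv.refl _).prodCongr (e.trans (cons b).symm) |>.trans <|
    AddEquiv.prodAssoc.symm.trans <| (pair.prodCongr (.refl _)).trans <|
    AddEquiv.prodAssoc.trans <| ((AddEquiv.refl _).prodCongr (cons (Fin.tail c))).trans (cons c)⟩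

theorem ZMod.nonempty_pi_addEquiv_gcd_lcm (s : ℕ) (m a : Fin (s + 1) → ℕ)
    (h0 : a 0 = univ.gcd m)
    (hsucc : ∀ i : Fin s, a i.succ = (m i.castSucc).lcm ((Ici i.succ).gcd m)) :
    Nonempty ((Π i, ZMod (m i)) ≃+ Π i, ZMod (a i)) := by
  induction s with
  | zero =>
    obtain rfl : a = m := by
      ext i
      rw [Fin.fin_one_eq_zero i, h0, Fin.gcd_univ_succ]
      simp
    exact ⟨.refl _⟩
  | succ s ih =>
    set b : Fin (s + 1) → ℕ := Fin.cons (univ.gcd (Fin.tail m)) fun i => a i.succ.succ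
    obtain ⟨e⟩ := ih (Fin.tail m) b rfl
      fun i => by
        simp only [b, Fin.cons_succ]
        rw [hsucc, Fin.gcd_Ici_succ, ← Fin.succ_castSucc]
        rfl
    have ha : a = Fin.cons ((m 0).gcd (b 0)) (Fin.cons ((m 0).lcm (b 0)) (Fin.tail b)) := by
      ext i
      refine Fin.cases ?_ (Fin.cases ?_ fun i => ?_) i
      · rw [h0, Fin.gcd_univ_succ]; rfl
      · rw [hsucc, Fin.gcd_Ici_succ]
        simp [b]
      · simp [b]
    rw [ha]
    exact ZMod.nonempty_pi_addEquiv_cons_gcd_lcm m b e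

theorem stmt_2 (s : ℕ) (hs : 1 ≤ s) (m a : Fin s → ℕ)
    (ha0 : a ⟨0, by omega⟩ = Finset.univ.gcd m)
    (ha : ∀ i : Fin s, 0 < (i : ℕ) →
      a i = Nat.lcm (m ⟨(i : ℕ) - 1, by omega⟩)
        ((Finset.univ.filter (fun j : Fin s => i ≤ j)).gcd m)) :
    Nonempty ((∀ i, ZMod (m i)) ≃+ (∀ i, ZMod (a i))) := by
  obtain ⟨s, rfl⟩ : ∃ s', s = s' + 1 := ⟨s - 1, by omega⟩
  refine ZMod.nonempty_pi_addEquiv_gcd_lcm s m a ha0 fun i => ?_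
  rw [ha i.succ i.succ_pos, filter_le_eq_Ici]
  rfl
end

section
/- Let s ≥ 1 and μ₁, …, μ_s be natural numbers; set μ₀ = 0. Define α_i = max(μ_{i-1}, min(μ_i, μ_{i+1}, …, μ_s)) for i = 1, …, s. Then the multiset {α₁, …, α_s} equals the multiset {μ₁, …, μ_s}. -/
/-!
Induct on `s` by splitting off `μ₁`. Write `m` for the minimum of `μ₂, …, μ_s`. The first two
terms of `α` are `min(μ₁, m)` and `max(μ₁, m)`, which together are `{μ₁, m}`. The remaining terms
`α₃, …, α_s` are the terms `α'₂, …, α'_{s-1}` of the same construction applied to `μ₂, …, μ_s`,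
and the missing first term of that construction is `α'₁ = m`. By induction, `{m, α₃, …, α_s}`
is the multiset `{μ₂, …, μ_s}`.
-/

theorem List.perm_min_max {α : Type*} [LinearOrder α] (a b : α) :
    [min a b, max a b].Perm [a, b] := by
  rcases le_total a b with h | h
  · rw [min_eq_left h, max_eq_right h]
  · rw [min_eq_right h, max_eq_left h]
    exact .swap a b []

namespace Fin

variable {β : Type*} [ConditionallyCompleteLinearOrderBot β]

noncomputable def suffixMin {s : ℕ} (μ : Fin s → β) (i : Fin s) : β :=
  sInf (μ '' Set.Ici i)

/-- `α_{i+1}` in the 1-based indexing of the statement, with `μ₀ = ⊥`. -/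
noncomputable def prevMaxSuffixMin {s : ℕ} (μ : Fin s → β) (i : Fin s) : β :=
  max (if 0 < (i : ℕ) then μ ⟨(i : ℕ) - 1, (Nat.sub_le _ _).trans_lt i.isLt⟩ else ⊥) (suffixMin μ i)

theorem suffixMin_zero {n : ℕ} (μ : Fin (n + 1) → β) : suffixMin μ 0 = sInf (Set.range μ) := by
  rw [suffixMin, ← bot_eq_zero, Set.Ici_bot, Set.image_univ]

theorem suffixMin_succ {n : ℕ} (μ : Fin (n + 1) → β) (i : Fin n) :
    suffixMin μ i.succ = suffixMin (tail μ) i := by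
  rw [suffixMin, suffixMin, ← image_succ_Ici, Set.image_image]
  rfl

theorem suffixMin_zero_eq_min {n : ℕ} (μ : Fin (n + 2) → β) :
    suffixMin μ 0 = min (μ 0) (suffixMin (tail μ) 0) := by
  rw [suffixMin_zero, suffixMin_zero, ← cons_self_tail μ, range_cons,
    csInf_insert (Set.finite_range _).bddBelow (Set.range_nonempty _)]
  rfl

theorem prevMaxSuffixMin_zero {n : ℕ} (μ : Fin (n + 1) → β) :
    prevMaxSuffixMin μ 0 = suffixMin μ 0 := by
  simp [prevMaxSuffixMin]

theorem prevMaxSuffixMin_succ {n : ℕ} (μ : Fin (n + 1) → β) (i : Fin n) :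
    prevMaxSuffixMin μ i.succ = max (μ i.castSucc) (suffixMin (tail μ) i) := by
  rw [prevMaxSuffixMin, if_pos (by simp), suffixMin_succ]
  rfl

theorem prevMaxSuffixMin_succ_succ {n : ℕ} (μ : Fin (n + 2) → β) (i : Fin n) :
    prevMaxSuffixMin μ i.succ.succ = prevMaxSuffixMin (tail μ) i.succ := by
  rw [prevMaxSuffixMin_succ, prevMaxSuffixMin_succ, ← succ_castSucc, suffixMin_succ]
  rfl

theorem ofFn_prevMaxSuffixMin_perm {s : ℕ} (μ : Fin s → β) :
    (List.ofFn (prevMaxSuffixMin μ)).Perm (List.ofFn μ) := by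
  induction s with
  | zero => simp
  | succ n ih =>
    cases n with
    | zero => simp [prevMaxSuffixMin_zero, suffixMin_zero, Set.range_unique]
    | succ n =>
      have htail := ih (tail μ)
      rw [List.ofFn_succ, prevMaxSuffixMin_zero] at htail
      rw [List.ofFn_succ, List.ofFn_succ, List.ofFn_succ (f := μ)]
      simp only [prevMaxSuffixMin_zero, suffixMin_zero_eq_min, prevMaxSuffixMin_succ_succ]
      rw [prevMaxSuffixMin_succ]
      exact ((List.perm_min_max _ _).append_right _).trans (htail.cons _)

end Fin

theorem stmt_3 (s : ℕ) (μ α : Fin s → ℕ)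
    (hα : ∀ i : Fin s, α i =
      max (if h : 0 < (i : ℕ) then μ ⟨(i : ℕ) - 1, by omega⟩ else 0)
        (sInf (↑((Finset.univ.filter (fun j : Fin s => i ≤ j)).image μ) : Set ℕ))) :
    (Finset.univ.val.map α : Multiset ℕ) = Finset.univ.val.map μ := by
  have hα' : α = Fin.prevMaxSuffixMin μ := by
    funext i
    simp only [hα, Finset.coe_image, Finset.coe_filter, Finset.mem_univ, true_and]
    rfl
  rw [hα', Fin.univ_val_map, Fin.univ_val_map, Multiset.coe_eq_coe]
  exact Fin.ofFn_prevMaxSuffixMin_perm μ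
end

section
/- Let q ≥ 2 be a natural number and let a be even and b odd, both positive. Then gcd(q^a - 1, q^b + 1) = q^{gcd(a,b)} + 1. -/
/-!
Put `d = gcd a b` and `x = q ^ d`. Since `q ^ b + 1 ∣ q ^ (2 * b) - 1` and `gcd a (2 * b) = 2 * d`,
the gcd divides `q ^ (2 * d) - 1 = x ^ 2 - 1`, which in turn divides `q ^ a - 1`; so the gcd equals
`gcd (x ^ 2 - 1) (x ^ m + 1)` with `m = b / d` odd. Modulo `x ^ 2 - 1` we have `x ^ m ≡ x`,
so this is `gcd (x ^ 2 - 1) (x + 1) = x + 1`.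
-/

namespace Nat

theorem pow_odd_modEq_self (x : ℕ) {m : ℕ} (hm : Odd m) : x ^ m ≡ x [MOD x ^ 2 - 1] := by
  obtain ⟨k, rfl⟩ := hm
  rcases x.eq_zero_or_pos with rfl | hx
  · simp
  have hsq : x ^ 2 ≡ 1 [MOD x ^ 2 - 1] := modEq_sub (Nat.one_le_pow _ _ hx)
  calc x ^ (2 * k + 1) = (x ^ 2) ^ k * x := by rw [pow_succ, pow_mul]
    _ ≡ 1 ^ k * x [MOD x ^ 2 - 1] := (hsq.pow k).mul_right x
    _ = x := by rw [one_pow, one_mul]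

theorem gcd_sq_sub_one_pow_add_one (x : ℕ) {m : ℕ} (hm : Odd m) :
    gcd (x ^ 2 - 1) (x ^ m + 1) = x + 1 := by
  rw [gcd_comm, ((pow_odd_modEq_self x hm).add_right 1).gcd_eq]
  exact gcd_eq_left (by rw [← one_pow 2, Nat.sq_sub_sq]; exact dvd_mul_right _ _)

theorem gcd_pow_sub_one_pow_add_one_dvd (q a b : ℕ) :
    gcd (q ^ a - 1) (q ^ b + 1) ∣ q ^ gcd a (2 * b) - 1 := by
  have hb : q ^ b + 1 ∣ q ^ (2 * b) - 1 := by
    rw [mul_comm, pow_mul, ← one_pow 2, Nat.sq_sub_sq]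
    exact dvd_mul_right _ _
  rw [← pow_sub_one_gcd_pow_sub_one]
  exact gcd_dvd_gcd_of_dvd_right _ hb

theorem gcd_two_mul_of_even_of_odd {a b : ℕ} (ha : Even a) (hb : Odd b) :
    gcd a (2 * b) = 2 * gcd a b := by
  rw [Coprime.gcd_mul a (coprime_two_left.mpr hb), gcd_eq_right ha.two_dvd]

end Nat

theorem stmt_5_general (q a b : ℕ)
    (hae : Even a) (hbo : Odd b) :
    Nat.gcd (q ^ a - 1) (q ^ b + 1) = q ^ (Nat.gcd a b) + 1 := by
  set d := Nat.gcd a b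
  obtain ⟨m, hm⟩ : d ∣ b := Nat.gcd_dvd_right a b
  have hmo : Odd m := (Nat.odd_mul.mp (hm ▸ hbo)).2
  have h2d : Nat.gcd a (2 * b) = 2 * d := Nat.gcd_two_mul_of_even_of_odd hae hbo
  have hx2 : (q ^ d) ^ 2 = q ^ (2 * d) := by rw [← pow_mul, mul_comm]
  have hsq_dvd : (q ^ d) ^ 2 - 1 ∣ q ^ a - 1 :=
    hx2 ▸ Nat.pow_sub_one_dvd_pow_sub_one q (h2d ▸ Nat.gcd_dvd_left a (2 * b))
  have hgcd_dvd : Nat.gcd (q ^ a - 1) (q ^ b + 1) ∣ (q ^ d) ^ 2 - 1 := by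
    rw [hx2, ← h2d]
    exact Nat.gcd_pow_sub_one_pow_add_one_dvd q a b
  have hxm : q ^ b = (q ^ d) ^ m := by rw [hm, pow_mul]
  rw [← Nat.gcd_sq_sub_one_pow_add_one (q ^ d) hmo, ← hxm]
  exact Nat.dvd_antisymm (Nat.dvd_gcd hgcd_dvd (Nat.gcd_dvd_right _ _))
    (Nat.gcd_dvd_gcd_of_dvd_left _ hsq_dvd)

theorem stmt_5 (q a b : ℕ) (hq : 2 ≤ q) (ha : 0 < a) (hb : 0 < b)
    (hae : Even a) (hbo : Odd b) :
    Nat.gcd (q ^ a - 1) (q ^ b + 1) = q ^ (Nat.gcd a b) + 1 :=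
  stmt_5_general q a b hae hbo
end

section
/- Let q ≥ 2 be a natural number and let a, b be odd positive natural numbers. Then gcd(q^a + 1, q^b + 1) = q^{gcd(a,b)} + 1. -/
/-!
Modulo `g = gcd (q ^ a + 1) (q ^ b + 1)` we have `q ^ a = q ^ b = -1`, so `q` is a unit and a
Bézout identity `gcd a b = a x + b y` gives `q ^ gcd a b = (-1) ^ (x + y) = -1`, because `x + y`
has the parity of `gcd a b`, which is odd. Conversely `q ^ d + 1` divides `q ^ (d r) + 1` for odd `r`.
-/

theorem pow_gcd_eq_neg_one_of_odd {M : Type*} [Monoid M] [HasDistribNeg M] {x : M} {a b : ℕ}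
    (ha : Odd a) (hb : Odd b) (hxa : x ^ a = -1) (hxb : x ^ b = -1) :
    x ^ a.gcd b = -1 := by
  have hx2a : x ^ (2 * a) = 1 := by rw [mul_comm, pow_mul, hxa, neg_one_sq]
  set u : Mˣ := Units.ofPowEqOne x (2 * a) hx2a (by have := ha.pos; omega)
  have hu : ∀ n, x ^ n = -1 → u ^ n = -1 := fun n h => Units.ext (by simpa [u] using h)
  have hodd : Odd (a.gcdA b + a.gcdB b) := by
    have hg : Odd ((a.gcd b : ℕ) : ℤ) := (ha.of_dvd_nat (Nat.gcd_dvd_left a b)).natCast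
    have ha' : Odd (a : ℤ) := ha.natCast
    have hb' : Odd (b : ℤ) := hb.natCast
    rw [Nat.gcd_eq_gcd_ab] at hg
    simp_all [Int.odd_add, Int.odd_mul, parity_simps]
  suffices u ^ (a.gcd b : ℤ) = -1 by simpa [u] using congrArg Units.val this
  rw [Nat.gcd_eq_gcd_ab, zpow_add, zpow_mul, zpow_mul, zpow_natCast, zpow_natCast, hu a hxa,
    hu b hxb, ← zpow_add]
  exact hodd.neg_one_zpow

theorem Nat.pow_add_one_dvd_pow_add_one (q : ℕ) {d n : ℕ} (hn : Odd n) (hd : d ∣ n) :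
    q ^ d + 1 ∣ q ^ n + 1 := by
  obtain ⟨r, rfl⟩ := hd
  simpa [pow_mul] using (Nat.odd_mul.mp hn).2.nat_add_dvd_pow_add_pow (q ^ d) 1

theorem Nat.dvd_pow_add_one_iff_pow_eq_neg_one (g q n : ℕ) :
    g ∣ q ^ n + 1 ↔ (q : ZMod g) ^ n = -1 := by
  rw [← ZMod.natCast_eq_zero_iff, Nat.cast_add, Nat.cast_pow, Nat.cast_one,
    add_eq_zero_iff_eq_neg]

theorem stmt_6_general (q a b : ℕ) (hao : Odd a) (hbo : Odd b) :
    Nat.gcd (q ^ a + 1) (q ^ b + 1) = q ^ (Nat.gcd a b) + 1 := by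
  apply Nat.dvd_antisymm
  · have hqa := Nat.gcd_dvd_left (q ^ a + 1) (q ^ b + 1)
    have hqb := Nat.gcd_dvd_right (q ^ a + 1) (q ^ b + 1)
    rw [Nat.dvd_pow_add_one_iff_pow_eq_neg_one] at hqa hqb ⊢
    exact pow_gcd_eq_neg_one_of_odd hao hbo hqa hqb
  · exact Nat.dvd_gcd (Nat.pow_add_one_dvd_pow_add_one q hao (Nat.gcd_dvd_left a b))
      (Nat.pow_add_one_dvd_pow_add_one q hbo (Nat.gcd_dvd_right a b))

theorem stmt_6 (q a b : ℕ) (hq : 2 ≤ q) (ha : 0 < a) (hb : 0 < b)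
    (hao : Odd a) (hbo : Odd b) :
    Nat.gcd (q ^ a + 1) (q ^ b + 1) = q ^ (Nat.gcd a b) + 1 :=
  stmt_6_general q a b hao hbo
end

section
/- Let s ≥ 1 and m₁, …, m_s be positive natural numbers. For 0 ≤ k ≤ s let δ_k = gcd over all k-element subsets {i₁ < … < i_k} of {1,…,s} of the products m_{i₁}·…·m_{i_k} (δ₀ = 1). Then δ_k/δ_{k-1} = lcm over all (s-k+1)-element subsets {i₁ < … < i_{s-k+1}} of gcd(m_{i₁}, …, m_{i_{s-k+1}}). -/
/-!
Work one prime `p` at a time and write `v i` for the exponent of `p` in `m i`, with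
`v₀ ≤ v₁ ≤ … ≤ v_{s-1}` its values in increasing order. The exponent of `p` in `δ_k` is the
least sum of `k` of the `v i`, namely `v₀ + … + v_{k-1}`. The exponent of `p` in the lcm is
`v_{k-1}`: every set of `s - k + 1` indices meets the `k` indices carrying the smallest values,
so its gcd has exponent at most `v_{k-1}`, and the `s - k + 1` indices carrying the largest
values attain it. The two exponents therefore differ by exactly `v_{k-1}`.
-/

open Finset

lemma Fin.val_le_val_of_strictMono {c n : ℕ} {φ : Fin c → Fin n} (hφ : StrictMono φ)
    (j : Fin c) : (j : ℕ) ≤ φ j :=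
  calc (j : ℕ) = #((Iio j).image φ) := by
        rw [card_image_of_injective _ hφ.injective, Fin.card_Iio]
    _ ≤ #(Iio (φ j)) := card_le_card <| by
        rintro _ hx
        obtain ⟨i, hi, rfl⟩ := mem_image.1 hx
        exact mem_Iio.2 (hφ (mem_Iio.1 hi))
    _ = φ j := Fin.card_Iio _

namespace Tuple

/-- The `j`-th smallest value of `f`, counting from `j = 0`. -/
def orderStat {n : ℕ} {α : Type*} [LinearOrder α] (f : Fin n → α) (j : Fin n) : α :=
  f (sort f j)

section LinearOrder

variable {n : ℕ} {α : Type*} [LinearOrder α]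

lemma monotone_orderStat (f : Fin n → α) : Monotone (orderStat f) :=
  monotone_sort f

lemma exists_mem_le_orderStat (f : Fin n → α) (i : Fin n) {V : Finset (Fin n)}
    (hV : n ≤ #V + i) : ∃ a ∈ V, f a ≤ orderStat f i := by
  obtain ⟨a, ha⟩ := inter_nonempty_of_card_lt_card_add_card (subset_univ V)
    (subset_univ ((Iic i).map (sort f).toEmbedding))
    (by simp only [card_univ, Fintype.card_fin, card_map, Fin.card_Iic]; omega)
  obtain ⟨haV, j, hj, rfl⟩ := mem_inter.1 ha |>.imp_right mem_map.1
  exact ⟨_, haV, monotone_orderStat f (mem_Iic.1 hj)⟩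

lemma orderStat_le_of_mem_map_Ici (f : Fin n → α) (i : Fin n) {a : Fin n}
    (ha : a ∈ (Ici i).map (sort f).toEmbedding) : orderStat f i ≤ f a := by
  obtain ⟨j, hj, rfl⟩ := mem_map.1 ha
  exact monotone_orderStat f (mem_Ici.1 hj)

end LinearOrder

section OrderedAddMonoid

variable {n c : ℕ} {M : Type*} [AddCommMonoid M] [LinearOrder M] [IsOrderedAddMonoid M]

lemma sum_castLE_le_sum_of_monotone {g : Fin n → M} (hg : Monotone g) (h : c ≤ n)
    {T : Finset (Fin n)} (hT : #T = c) :
    ∑ j : Fin c, g (Fin.castLE h j) ≤ ∑ i ∈ T, g i := by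
  rw [← map_orderEmbOfFin_univ T hT, sum_map]
  exact sum_le_sum fun j _ => hg (Fin.val_le_val_of_strictMono (T.orderEmbOfFin hT).strictMono j)

lemma sum_orderStat_le_sum (f : Fin n → M) (h : c ≤ n) {T : Finset (Fin n)} (hT : #T = c) :
    ∑ j : Fin c, orderStat f (Fin.castLE h j) ≤ ∑ i ∈ T, f i :=
  calc ∑ j : Fin c, orderStat f (Fin.castLE h j)
      ≤ ∑ i ∈ T.map (sort f).symm.toEmbedding, orderStat f i :=
        sum_castLE_le_sum_of_monotone (monotone_orderStat f) h (by simpa using hT)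
    _ = ∑ i ∈ T, f i := by simp [sum_map, orderStat]

lemma inf'_powersetCard_sum_eq_sum_orderStat (f : Fin n → M) (h : c ≤ n)
    (hne : (powersetCard c (univ : Finset (Fin n))).Nonempty) :
    (powersetCard c univ).inf' hne (fun T => ∑ i ∈ T, f i)
      = ∑ j : Fin c, orderStat f (Fin.castLE h j) := by
  refine le_antisymm ?_ (le_inf' _ _ fun T hT => sum_orderStat_le_sum f h (mem_powersetCard.1 hT).2)
  let T₀ := (univ.map (Fin.castLEEmb h)).map (sort f).toEmbedding
  have hT₀ : T₀ ∈ powersetCard c univ := by simp [T₀]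
  exact (inf'_le _ hT₀).trans_eq (by simp [T₀, sum_map, orderStat])

end OrderedAddMonoid

end Tuple

open Tuple

lemma Finset.factorization_gcd {ι : Type*} {f : ι → ℕ} {s : Finset ι} (hs : s.Nonempty)
    (hf : ∀ a ∈ s, f a ≠ 0) (p : ℕ) :
    (s.gcd f).factorization p = s.inf' hs fun a => (f a).factorization p := by
  obtain ⟨b, hb⟩ := hs
  have hgcd : s.gcd f ≠ 0 := gcd_ne_zero_iff.2 ⟨b, hb, hf b hb⟩
  refine le_antisymm (le_inf' _ _ fun a ha => ?_) ?_
  · exact (Nat.factorization_le_iff_dvd hgcd (hf a ha)).2 (gcd_dvd ha) p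
  by_cases hp : p.Prime
  · refine (hp.pow_dvd_iff_le_factorization hgcd).1 (dvd_gcd fun a ha => ?_)
    exact (hp.pow_dvd_iff_le_factorization (hf a ha)).2 (inf'_le _ ha)
  · exact (inf'_le _ hb).trans (by simp [Nat.factorization_eq_zero_of_not_prime _ hp])

section

variable {n : ℕ} {m : Fin n → ℕ}

lemma nonempty_of_mem_powersetCard_sub {i : Fin n} {V : Finset (Fin n)}
    (hV : V ∈ powersetCard (n - i) univ) : V.Nonempty :=
  card_pos.1 <| by rw [(mem_powersetCard.1 hV).2]; omega

lemma gcd_ne_zero_of_mem_powersetCard_sub (hm : ∀ i, m i ≠ 0) {i : Fin n} {V : Finset (Fin n)}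
    (hV : V ∈ powersetCard (n - i) univ) : V.gcd m ≠ 0 :=
  gcd_ne_zero_iff.2 <| (nonempty_of_mem_powersetCard_sub hV).imp fun a ha => ⟨ha, hm a⟩

lemma factorization_gcd_prod_powersetCard (hm : ∀ i, m i ≠ 0) {c : ℕ} (h : c ≤ n)
    (p : ℕ) :
    ((powersetCard c univ).gcd fun T => ∏ i ∈ T, m i).factorization p
      = ∑ j : Fin c, orderStat (fun a => (m a).factorization p) (Fin.castLE h j) := by
  have hne : (powersetCard c (univ : Finset (Fin n))).Nonempty :=
    powersetCard_nonempty.2 (by simpa using h)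
  rw [factorization_gcd hne (fun T _ => prod_ne_zero_iff.2 fun i _ => hm i), ←
    inf'_powersetCard_sum_eq_sum_orderStat _ h hne]
  exact inf'_congr hne rfl fun T _ => by
    rw [Nat.factorization_prod fun i _ => hm i, Finsupp.finsetSum_apply]

lemma factorization_lcm_gcd_powersetCard (hm : ∀ i, m i ≠ 0) (i : Fin n) (p : ℕ) :
    ((powersetCard (n - i) univ).lcm fun V => V.gcd m).factorization p
      = orderStat (fun a => (m a).factorization p) i := by
  set v := fun a => (m a).factorization p
  have hgcd : ∀ V (hV : V ∈ powersetCard (n - i) univ),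
      (V.gcd m).factorization p = V.inf' (nonempty_of_mem_powersetCard_sub hV) v := fun V _ =>
    factorization_gcd _ (fun a _ => hm a) p
  rw [Finset.factorization_lcm (fun V hV => gcd_ne_zero_of_mem_powersetCard_sub hm hV) p]
  refine le_antisymm (Finset.sup_le fun V hV => ?_) ?_
  · obtain ⟨a, ha, hle⟩ := exists_mem_le_orderStat v i (V := V) <| by
      rw [(mem_powersetCard.1 hV).2]; omega
    exact (hgcd V hV).trans_le ((inf'_le _ ha).trans hle)
  · have hV₀ : (Ici i).map (sort v).toEmbedding ∈ powersetCard (n - i) univ := by simp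
    exact le_sup_of_le hV₀ <| (hgcd _ hV₀).ge.trans' <|
      le_inf' _ _ fun a ha => orderStat_le_of_mem_map_Ici v i ha

end

theorem stmt_10_general (s : ℕ) (m : Fin s → ℕ) (hm : ∀ i, 0 < m i)
    (δ : ℕ → ℕ)
    (hδ : ∀ k, δ k = (Finset.powersetCard k (Finset.univ : Finset (Fin s))).gcd
      (fun T => ∏ i ∈ T, m i)) :
    ∀ k, 1 ≤ k → k ≤ s →
      δ k / δ (k - 1) =
        (Finset.powersetCard (s - k + 1) (Finset.univ : Finset (Fin s))).lcm
          (fun T => T.gcd m) := by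
  intro k hk hks
  obtain ⟨j, rfl⟩ : ∃ j, k = j + 1 := ⟨k - 1, by omega⟩
  have hm₀ : ∀ i, m i ≠ 0 := fun i => (hm i).ne'
  set i : Fin s := ⟨j, hks⟩
  rw [Nat.add_sub_cancel, show s - (j + 1) + 1 = s - i by simp only [i]; omega]
  set L := (powersetCard (s - i) univ).lcm fun T => T.gcd m
  have hδ₀ : ∀ c ≤ s, δ c ≠ 0 := fun c hc => by
    obtain ⟨T, hT⟩ := powersetCard_nonempty (s := (univ : Finset (Fin s))).2 (by simpa using hc)
    exact hδ c ▸ gcd_ne_zero_iff.2 ⟨T, hT, prod_ne_zero_iff.2 fun i _ => hm₀ i⟩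
  have hδj : δ j ≠ 0 := hδ₀ j (by omega)
  have hL₀ : L ≠ 0 := lcm_ne_zero_iff.2 fun V hV => gcd_ne_zero_of_mem_powersetCard_sub hm₀ hV
  suffices δ (j + 1) = δ j * L by
    rw [this, Nat.mul_div_cancel_left _ (Nat.pos_of_ne_zero hδj)]
  refine Nat.eq_of_factorization_eq (hδ₀ _ hks) (mul_ne_zero hδj hL₀) fun p => ?_
  rw [Nat.factorization_mul hδj hL₀, Finsupp.add_apply, hδ, hδ,
    factorization_gcd_prod_powersetCard hm₀ hks,
    factorization_gcd_prod_powersetCard hm₀ (by omega),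
    factorization_lcm_gcd_powersetCard hm₀ i, Fin.sum_univ_castSucc]
  rfl

theorem stmt_10 (s : ℕ) (hs : 1 ≤ s) (m : Fin s → ℕ) (hm : ∀ i, 0 < m i)
    (δ : ℕ → ℕ)
    (hδ : ∀ k, δ k = (Finset.powersetCard k (Finset.univ : Finset (Fin s))).gcd
      (fun T => ∏ i ∈ T, m i)) :
    ∀ k, 1 ≤ k → k ≤ s →
      δ k / δ (k - 1) =
        (Finset.powersetCard (s - k + 1) (Finset.univ : Finset (Fin s))).lcm
          (fun T => T.gcd m) :=
  stmt_10_general s m hm δ hδ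
end

section
/- Let n₁, n₂ be coprime positive natural numbers and q ≥ 2 a natural number. Then lcm(q^{n₁} - 1, q^{n₂} - 1) = (q^{n₁} - 1)(q^{n₂} - 1)/(q - 1). -/
theorem stmt_13_general (q n₁ n₂ : ℕ)
    (hco : Nat.Coprime n₁ n₂) :
    Nat.lcm (q ^ n₁ - 1) (q ^ n₂ - 1) = (q ^ n₁ - 1) * (q ^ n₂ - 1) / (q - 1) := by
  rw [Nat.lcm, Nat.pow_sub_one_gcd_pow_sub_one, hco, pow_one]

theorem stmt_13 (q n₁ n₂ : ℕ) (hq : 2 ≤ q) (h₁ : 0 < n₁) (h₂ : 0 < n₂)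
    (hco : Nat.Coprime n₁ n₂) :
    Nat.lcm (q ^ n₁ - 1) (q ^ n₂ - 1) = (q ^ n₁ - 1) * (q ^ n₂ - 1) / (q - 1) :=
  stmt_13_general q n₁ n₂ hco
end

section
/- Let A = Z_{m₁} × ⋯ × Z_{m_s} with m_i positive natural numbers, and let d = gcd(m₁,…,m_s). Then A has a direct factor isomorphic to Z_d, i.e. A ≅ Z_d × A' for some abelian group A'. -/
/-!
Let `d` be the gcd of the `mᵢ`. Summing the reductions `Z_{mᵢ} → Z_d` gives `φ : A → Z_d`.
Bézout for the coprime numbers `mᵢ / d` yields integers `cᵢ` with `∑ cᵢ mᵢ / d = 1`, so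
`e = (cᵢ mᵢ / d)ᵢ` satisfies `d • e = 0` and `φ e = 1`. Thus `1 ↦ e` is a section of `φ`, and
`A ≅ Z_d × ker φ`.
-/

theorem Finset.natCast_gcd {ι : Type*} (s : Finset ι) (f : ι → ℕ) :
    ((s.gcd f : ℕ) : ℤ) = s.gcd (fun i ↦ (f i : ℤ)) := by
  classical
  induction s using Finset.induction_on with
  | empty => simp
  | insert a s ha ih =>
    rw [gcd_insert, gcd_insert, ← ih, ← Int.coe_gcd, Int.gcd_natCast_natCast]
    rfl

namespace AddMonoidHom

variable {A B : Type*} [AddCommGroup A] [AddCommGroup B]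

def addEquivProdKerOfRightInverse (φ : A →+ B) (ψ : B →+ A) (h : Function.RightInverse ψ φ) :
    A ≃+ B × φ.ker where
  toFun a := (φ a, ⟨a - ψ (φ a), by simp [mem_ker, h (φ a)]⟩)
  invFun p := ψ p.1 + p.2
  left_inv a := by simp
  right_inv := by
    rintro ⟨b, k, hk⟩
    rw [mem_ker] at hk
    ext <;> simp [hk, h b]
  map_add' a b := by
    ext <;> simp only [map_add, Prod.fst_add, Prod.snd_add, AddSubgroup.coe_add]
    abel

end AddMonoidHom

universe u v

theorem exists_addEquiv_zmod_prod_of_nsmul_eq_zero {A : Type u} [AddCommGroup A] {d : ℕ}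
    (φ : A →+ ZMod d) {e : A} (hde : d • e = 0) (hφe : φ e = 1) :
    ∃ A' : AddCommGrpCat.{max u v}, Nonempty (A ≃+ ZMod d × A') := by
  let ψ : ZMod d →+ A := ZMod.lift d ⟨zmultiplesHom A e, by simpa using hde⟩
  have hψ : Function.RightInverse ψ φ := by
    intro b
    obtain ⟨x, rfl⟩ := ZMod.intCast_surjective b
    simp [ψ, ZMod.lift_coe, hφe]
  exact ⟨.of (ULift.{v} φ.ker), ⟨(φ.addEquivProdKerOfRightInverse ψ hψ).trans
    (.prodCongr (.refl _) AddEquiv.ulift.symm)⟩⟩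

theorem exists_addEquiv_pi_zmod_prod {ι : Type u} [Fintype ι] {m : ι → ℕ} {d : ℕ}
    (hdvd : ∀ i, d ∣ m i) {c : ι → ℤ} (hc : ∑ i, ((m i / d : ℕ) : ℤ) * c i = 1) :
    ∃ A' : AddCommGrpCat.{max u v}, Nonempty ((∀ i, ZMod (m i)) ≃+ ZMod d × A') := by
  let φ : (∀ i, ZMod (m i)) →+ ZMod d :=
    ∑ i, (ZMod.castHom (hdvd i) (ZMod d)).toAddMonoidHom.comp (Pi.evalAddMonoidHom _ i)
  let e : ∀ i, ZMod (m i) := fun i ↦ (((m i / d : ℕ) * c i : ℤ) : ZMod (m i))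
  refine exists_addEquiv_zmod_prod_of_nsmul_eq_zero φ (e := e) ?_ ?_
  · funext i
    have hmul : (d : ℤ) * ((m i / d : ℕ) * c i) = m i * c i := by
      rw [← mul_assoc, ← Nat.cast_mul, Nat.mul_div_cancel' (hdvd i)]
    simp only [e, Pi.smul_apply, nsmul_eq_mul, Pi.zero_apply]
    rw [← Int.cast_natCast, ← Int.cast_mul, hmul, Int.cast_mul, Int.cast_natCast,
      ZMod.natCast_self, zero_mul]
  · simp only [φ, e, AddMonoidHom.finsetSum_apply, AddMonoidHom.comp_apply,
      Pi.evalAddMonoidHom_apply, RingHom.toAddMonoidHom_eq_coe, AddMonoidHom.coe_coe, map_intCast]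
    rw [← Int.cast_sum, hc, Int.cast_one]

theorem stmt_17 (s : ℕ) (hs : 1 ≤ s) (m : Fin s → ℕ) (hm : ∀ i, 0 < m i) :
    ∃ A' : AddCommGrpCat,
      Nonempty ((∀ i, ZMod (m i)) ≃+ (ZMod (Finset.univ.gcd m) × A')) := by
  have hgcd : Finset.univ.gcd (fun i ↦ m i / Finset.univ.gcd m) = 1 :=
    Finset.gcd_div_eq_one (Finset.mem_univ ⟨0, hs⟩) (hm _).ne'
  obtain ⟨c, hc⟩ := Finset.univ.gcd_eq_sum_mul (fun i ↦ ((m i / Finset.univ.gcd m : ℕ) : ℤ))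
  rw [← Finset.natCast_gcd, hgcd, Nat.cast_one] at hc
  exact exists_addEquiv_pi_zmod_prod (fun i ↦ Finset.gcd_dvd (Finset.mem_univ i)) hc.symm
end

section
/- Let q ≥ 2 and n₁, n₂, n₃ positive natural numbers with gcd(n₁, n₂, n₃) = 1. Then Z_{q^{n₁}-1} × Z_{q^{n₂}-1} × Z_{q^{n₃}-1} is isomorphic to Z_{q-1} × Z_{lcm(q^{n₁}-1, q^{gcd(n₂,n₃)}-1)} × Z_{lcm(q^{n₂}-1, q^{n₃}-1)}. -/
/-!
The heart of the matter is the identity `ℤ/m × ℤ/n ≅ ℤ/gcd(m,n) × ℤ/lcm(m,n)`. Split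
`lcm(m,n) = L * R` into coprime factors with `L ∣ m` and `R ∣ n` (send each prime power of the lcm
to a side where it is attained). Then `m = L * a`, `n = R * b` with `a * b = gcd(m,n)`, and the
pairs `L, a`, `R, b`, `a, b`, `L, R` are coprime, so the Chinese remainder theorem regroups
`ℤ/L × ℤ/a × ℤ/R × ℤ/b` as `ℤ/(a * b) × ℤ/(L * R)`.
Applying this to `q^n₂ - 1, q^n₃ - 1` and then to `q^n₁ - 1, q^gcd(n₂,n₃) - 1`, together with
`gcd(q^a - 1, q^b - 1) = q^gcd(a,b) - 1` and `gcd(n₁, n₂, n₃) = 1`, gives the theorem.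
-/

namespace Nat

variable {m n L R : ℕ}

theorem Coprime.coprime_div_of_mul_eq_lcm (hm : m ≠ 0) (hLm : L ∣ m) (hLR : Coprime L R)
    (hlcm : L * R = lcm m n) : Coprime L (m / L) := by
  have hL : L ≠ 0 := ne_zero_of_dvd_ne_zero hm hLm
  have hdR : gcd L (m / L) ∣ R := by
    refine (Nat.mul_dvd_mul_iff_left (Nat.pos_of_ne_zero hL)).mp ?_
    calc L * gcd L (m / L) ∣ L * (m / L) := Nat.mul_dvd_mul_left L (gcd_dvd_right _ _)
      _ = m := Nat.mul_div_cancel' hLm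
      _ ∣ L * R := hlcm ▸ dvd_lcm_left m n
  exact eq_one_of_dvd_coprimes hLR (gcd_dvd_left _ _) hdR

theorem Coprime.coprime_div_div_of_mul_eq_lcm (hm : m ≠ 0) (hn : n ≠ 0) (hLm : L ∣ m)
    (hRn : R ∣ n) (hLR : Coprime L R) (hlcm : L * R = lcm m n) :
    Coprime (m / L) (n / R) := by
  have hLa : Coprime L (m / L) := hLR.coprime_div_of_mul_eq_lcm hm hLm hlcm
  have hRb : Coprime R (n / R) :=
    hLR.symm.coprime_div_of_mul_eq_lcm hn hRn (by rw [mul_comm, hlcm, lcm_comm])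
  have hcop : Coprime (gcd (m / L) (n / R)) (L * R) :=
    Coprime.mul_right (hLa.symm.coprime_dvd_left (gcd_dvd_left _ _))
      (hRb.symm.coprime_dvd_left (gcd_dvd_right _ _))
  refine eq_one_of_dvd_coprimes hcop dvd_rfl ?_
  calc gcd (m / L) (n / R) ∣ m / L := gcd_dvd_left _ _
    _ ∣ m := div_dvd_of_dvd hLm
    _ ∣ L * R := hlcm ▸ dvd_lcm_left m n

end Nat

namespace ZMod

open Nat hiding gcd lcm

theorem nonempty_mul_prod_mul_addEquiv {L a R b : ℕ} (hLa : Coprime L a) (hRb : Coprime R b)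
    (hab : Coprime a b) (hLR : Coprime L R) :
    Nonempty (ZMod (L * a) × ZMod (R * b) ≃+ ZMod (a * b) × ZMod (L * R)) :=
  ⟨(((chineseRemainder hLa).toAddEquiv.prodCongr (chineseRemainder hRb).toAddEquiv).trans
      ((AddEquiv.prodProdProdComm _ _ _ _).trans AddEquiv.prodComm)).trans
    ((chineseRemainder hab).toAddEquiv.symm.prodCongr (chineseRemainder hLR).toAddEquiv.symm)⟩

theorem nonempty_prod_addEquiv_gcd_lcm_s18 (m n : ℕ) :
    Nonempty (ZMod m × ZMod n ≃+ ZMod (Nat.gcd m n) × ZMod (Nat.lcm m n)) := by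
  rcases eq_or_ne m 0 with rfl | hm
  · rw [Nat.gcd_zero_left, Nat.lcm_zero_left]
    exact ⟨AddEquiv.prodComm⟩
  rcases eq_or_ne n 0 with rfl | hn
  · rw [Nat.gcd_zero_right, Nat.lcm_zero_right]
    exact ⟨AddEquiv.refl _⟩
  set L := factorizationLCMLeft m n
  set R := factorizationLCMRight m n
  have hLm : L ∣ m := factorizationLCMLeft_dvd_left m n
  have hRn : R ∣ n := factorizationLCMRight_dvd_right m n
  have hLR : Coprime L R := coprime_factorizationLCMLeft_factorizationLCMRight m n
  have hlcm : L * R = Nat.lcm m n := factorizationLCMLeft_mul_factorizationLCMRight hm hn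
  have hgcd : m / L * (n / R) = Nat.gcd m n := by
    refine Nat.eq_of_mul_eq_mul_right (Nat.pos_of_ne_zero (lcm_ne_zero hm hn)) ?_
    calc m / L * (n / R) * Nat.lcm m n = L * (m / L) * (R * (n / R)) := by rw [← hlcm]; ring
      _ = Nat.gcd m n * Nat.lcm m n := by
        rw [Nat.mul_div_cancel' hLm, Nat.mul_div_cancel' hRn, Nat.gcd_mul_lcm]
  have key := nonempty_mul_prod_mul_addEquiv (hLR.coprime_div_of_mul_eq_lcm hm hLm hlcm)
    (hLR.symm.coprime_div_of_mul_eq_lcm hn hRn (by rw [mul_comm, hlcm, Nat.lcm_comm]))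
    (hLR.coprime_div_div_of_mul_eq_lcm hm hn hLm hRn hlcm) hLR
  rwa [Nat.mul_div_cancel' hLm, Nat.mul_div_cancel' hRn, hgcd, hlcm] at key

end ZMod

theorem stmt_18_general (q n₁ n₂ n₃ : ℕ)
    (hgcd : Nat.gcd n₁ (Nat.gcd n₂ n₃) = 1) :
    Nonempty ((ZMod (q ^ n₁ - 1) × ZMod (q ^ n₂ - 1) × ZMod (q ^ n₃ - 1)) ≃+
      (ZMod (q - 1) ×
       ZMod (Nat.lcm (q ^ n₁ - 1) (q ^ (Nat.gcd n₂ n₃) - 1)) ×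
       ZMod (Nat.lcm (q ^ n₂ - 1) (q ^ n₃ - 1)))) := by
  obtain ⟨e₂₃⟩ := ZMod.nonempty_prod_addEquiv_gcd_lcm_s18 (q ^ n₂ - 1) (q ^ n₃ - 1)
  rw [Nat.pow_sub_one_gcd_pow_sub_one] at e₂₃
  obtain ⟨e₁⟩ := ZMod.nonempty_prod_addEquiv_gcd_lcm_s18 (q ^ n₁ - 1) (q ^ Nat.gcd n₂ n₃ - 1)
  rw [Nat.pow_sub_one_gcd_pow_sub_one, hgcd, pow_one] at e₁
  exact ⟨(((AddEquiv.refl _).prodCongr e₂₃).trans AddEquiv.prodAssoc.symm).trans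
    ((e₁.prodCongr (AddEquiv.refl _)).trans AddEquiv.prodAssoc)⟩

theorem stmt_18 (q n₁ n₂ n₃ : ℕ) (hq : 2 ≤ q) (h₁ : 0 < n₁) (h₂ : 0 < n₂) (h₃ : 0 < n₃)
    (hgcd : Nat.gcd n₁ (Nat.gcd n₂ n₃) = 1) :
    Nonempty ((ZMod (q ^ n₁ - 1) × ZMod (q ^ n₂ - 1) × ZMod (q ^ n₃ - 1)) ≃+
      (ZMod (q - 1) ×
       ZMod (Nat.lcm (q ^ n₁ - 1) (q ^ (Nat.gcd n₂ n₃) - 1)) ×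
       ZMod (Nat.lcm (q ^ n₂ - 1) (q ^ n₃ - 1)))) :=
  stmt_18_general q n₁ n₂ n₃ hgcd
end
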